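/- Let n ≥ 1 and let S ∈ Mat_n(ℂ)((x)) be an indecomposable solution whose semisimple part S⁰ is nonzero with ord S⁰ < 0. Then ord S⁰ = −1, deg p = deg q + 2, and the coefficient of x^{−1} in S⁰ equals −(leading coefficient of q)/(leading coefficient of p). -/

import Mathlib

/-! The coefficients of `S` commute and each has a single eigenvalue, so on the commutative
algebra they generate "the eigenvalue" is a `ℂ`-algebra character: sums and products of commuting
scalar-plus-nilpotent elements are again scalar-plus-nilpotent. Applied coefficientwise it is an
algebra map of Laurent series sending `S` to `S⁰`, so `S⁰` solves the scalar equation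
`q(S⁰) · dS⁰/dx = p(S⁰)`. For a scalar series `f` of order `o < 0`, `g(f)` has order `deg g · o`
and leading coefficient `lc g · lc f ^ deg g`, while `df/dx` has order `o - 1` and leading
coefficient `o · lc f`. Comparing orders gives `(deg p - deg q - 1) · o = -1`, hence `o = -1` and
`deg p = deg q + 2`; comparing leading coefficients gives `lc p · lc f = -lc q`. -/

noncomputable def lderiv {R : Type*} [Ring R] (S : LaurentSeries R) : LaurentSeries R :=
  { coeff := fun i => (i + 1) • S.coeff (i + 1)
    isPWO_support' := by
      have h : Function.support (fun i : ℤ => (i + 1) • S.coeff (i + 1)) ⊆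
          (fun i : ℤ => i - 1) '' S.support := by
        intro i hi
        have hne : S.coeff (i + 1) ≠ 0 := by
          intro h0
          apply hi
          simp [h0]
        exact ⟨i + 1, hne, by ring⟩
      exact (S.isPWO_support'.image_of_monotone
        (fun a b hab => by simpa using hab : Monotone (fun i : ℤ => i - 1))).mono h }

/-- `S` is a "solution", i.e. corresponds to an `n`-dimensional
vertex algebra `(ℂ(s), (p/q) d/ds)`-module. -/
def IsSolution (p q : Polynomial ℂ) {n : ℕ}
    (S : LaurentSeries (Matrix (Fin n) (Fin n) ℂ)) : Prop :=
  (∀ α : ℂ, IsUnit (S - algebraMap ℂ (LaurentSeries (Matrix (Fin n) (Fin n) ℂ)) α)) ∧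
  (∀ i j : ℤ, Commute (S.coeff i) (S.coeff j)) ∧
  Polynomial.aeval S q * lderiv S = Polynomial.aeval S p

/-- Indecomposability of the corresponding module `ℂⁿ`: no direct sum decomposition
into two nonzero subspaces stable under all coefficients of `S`. -/
def Indecomp {n : ℕ} (S : LaurentSeries (Matrix (Fin n) (Fin n) ℂ)) : Prop :=
  ¬ ∃ U W : Submodule ℂ (Fin n → ℂ), U ≠ ⊥ ∧ W ≠ ⊥ ∧ U ⊓ W = ⊥ ∧ U ⊔ W = ⊤ ∧
    (∀ i : ℤ, ∀ v ∈ U, (S.coeff i).mulVec v ∈ U) ∧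
    (∀ i : ℤ, ∀ v ∈ W, (S.coeff i).mulVec v ∈ W)

/-- `S0` is the semisimple part of `S`: each coefficient of `S0` is the unique
eigenvalue of the corresponding coefficient of `S`. -/
def IsSemisimplePart {n : ℕ} (S : LaurentSeries (Matrix (Fin n) (Fin n) ℂ))
    (S0 : LaurentSeries ℂ) : Prop :=
  ∀ i : ℤ, IsNilpotent (S.coeff i - S0.coeff i • (1 : Matrix (Fin n) (Fin n) ℂ))

/-- The nilpotent `n × n` Jordan block with ones on the superdiagonal. -/
def Jn (n : ℕ) : Matrix (Fin n) (Fin n) ℂ :=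
  Matrix.of fun i j => if (i : ℕ) + 1 = (j : ℕ) then 1 else 0

theorem Algebra.commute_of_mem_adjoin_of_pairwise_commute {R A : Type*} [CommSemiring R]
    [Semiring A] [Algebra R A] {s : Set A} (hcomm : ∀ a ∈ s, ∀ b ∈ s, Commute a b) {a b : A}
    (ha : a ∈ adjoin R s) (hb : b ∈ adjoin R s) : Commute a b :=
  commute_of_mem_adjoin_of_forall_mem_commute hb fun c hc =>
    (commute_of_mem_adjoin_of_forall_mem_commute ha fun d hd => hcomm c hc d hd).symm

section ScalarPlusNilpotent

variable {K A : Type*} [Field K] [Ring A] [Algebra K A] {a b : A} {l m : K}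

theorem Commute.sub_smul_one_right (hab : Commute a b) (m : K) : Commute a (b - m • 1) :=
  hab.sub_right ((Commute.one_right a).smul_right m)

theorem Commute.sub_smul_one_left (hab : Commute a b) (l : K) : Commute (a - l • 1) b :=
  (hab.symm.sub_smul_one_right l).symm

theorem Commute.isNilpotent_add_sub_smul_one (hab : Commute a b)
    (ha : IsNilpotent (a - l • 1)) (hb : IsNilpotent (b - m • 1)) :
    IsNilpotent (a + b - (l + m) • 1) := by
  rw [show a + b - (l + m) • (1 : A) = (a - l • 1) + (b - m • 1) by rw [add_smul]; abel]
  exact ((hab.sub_smul_one_left l).sub_smul_one_right m).isNilpotent_add ha hb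

theorem Commute.isNilpotent_mul_sub_smul_one (hab : Commute a b)
    (ha : IsNilpotent (a - l • 1)) (hb : IsNilpotent (b - m • 1)) :
    IsNilpotent (a * b - (l * m) • 1) := by
  have hcomm : Commute (a * (b - m • 1)) (m • (a - l • 1)) :=
    (((Commute.refl a).sub_smul_one_right l).mul_left
      ((hab.symm.sub_smul_one_left m).sub_smul_one_right l)).smul_right m
  rw [show a * b - (l * m) • (1 : A) = a * (b - m • 1) + m • (a - l • 1) by
    rw [mul_sub, smul_sub, mul_smul_comm, mul_one, smul_smul, mul_comm m l]; abel]
  exact hcomm.isNilpotent_add ((hab.sub_smul_one_right m).isNilpotent_mul_left hb) (ha.smul m)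

theorem eq_of_isNilpotent_sub_smul_one [Nontrivial A]
    (hl : IsNilpotent (a - l • 1)) (hm : IsNilpotent (a - m • 1)) : l = m := by
  obtain ⟨k, hk⟩ :=
    (((Commute.refl a).sub_smul_one_left m).sub_smul_one_right l).isNilpotent_sub hm hl
  rw [sub_sub_sub_cancel_left, ← sub_smul, smul_pow, one_pow, smul_eq_zero] at hk
  have : IsNilpotent (l - m) := ⟨k, hk.resolve_right one_ne_zero⟩
  exact sub_eq_zero.mp this.eq_zero

theorem exists_isNilpotent_sub_smul_one_of_mem_adjoin {s : Set A}
    (hcomm : ∀ a ∈ s, ∀ b ∈ s, Commute a b) (hs : ∀ a ∈ s, ∃ l : K, IsNilpotent (a - l • 1))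
    (ha : a ∈ Algebra.adjoin K s) : ∃ l : K, IsNilpotent (a - l • 1) := by
  induction ha using Algebra.adjoin_induction with
  | mem x hx => exact hs x hx
  | algebraMap r => exact ⟨r, by simp [Algebra.algebraMap_eq_smul_one]⟩
  | add x y hx hy ihx ihy =>
    obtain ⟨l, hl⟩ := ihx
    obtain ⟨m, hm⟩ := ihy
    exact ⟨l + m, (Algebra.commute_of_mem_adjoin_of_pairwise_commute hcomm hx hy
      ).isNilpotent_add_sub_smul_one hl hm⟩
  | mul x y hx hy ihx ihy =>
    obtain ⟨l, hl⟩ := ihx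
    obtain ⟨m, hm⟩ := ihy
    exact ⟨l * m, (Algebra.commute_of_mem_adjoin_of_pairwise_commute hcomm hx hy
      ).isNilpotent_mul_sub_smul_one hl hm⟩

end ScalarPlusNilpotent

open Classical in
noncomputable def uniqueEigenvalue (K : Type*) {A : Type*} [Field K] [Ring A] [Algebra K A]
    (a : A) : K :=
  if h : ∃ l : K, IsNilpotent (a - l • 1) then h.choose else 0

section UniqueEigenvalue

variable {K A : Type*} [Field K] [Ring A] [Algebra K A] [Nontrivial A] {a b : A}

theorem uniqueEigenvalue_eq {l : K} (h : IsNilpotent (a - l • 1)) :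
    uniqueEigenvalue K a = l := by
  have hex : ∃ l : K, IsNilpotent (a - l • 1) := ⟨l, h⟩
  rw [uniqueEigenvalue, dif_pos hex]
  exact eq_of_isNilpotent_sub_smul_one hex.choose_spec h

theorem Commute.uniqueEigenvalue_add (hab : Commute a b) (ha : ∃ l : K, IsNilpotent (a - l • 1))
    (hb : ∃ m : K, IsNilpotent (b - m • 1)) :
    uniqueEigenvalue K (a + b) = uniqueEigenvalue K a + uniqueEigenvalue K b := by
  obtain ⟨l, hl⟩ := ha
  obtain ⟨m, hm⟩ := hb
  rw [uniqueEigenvalue_eq hl, uniqueEigenvalue_eq hm,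
    uniqueEigenvalue_eq (hab.isNilpotent_add_sub_smul_one hl hm)]

theorem Commute.uniqueEigenvalue_mul (hab : Commute a b) (ha : ∃ l : K, IsNilpotent (a - l • 1))
    (hb : ∃ m : K, IsNilpotent (b - m • 1)) :
    uniqueEigenvalue K (a * b) = uniqueEigenvalue K a * uniqueEigenvalue K b := by
  obtain ⟨l, hl⟩ := ha
  obtain ⟨m, hm⟩ := hb
  rw [uniqueEigenvalue_eq hl, uniqueEigenvalue_eq hm,
    uniqueEigenvalue_eq (hab.isNilpotent_mul_sub_smul_one hl hm)]

noncomputable def adjoinEigenvalueHom {s : Set A} (hcomm : ∀ a ∈ s, ∀ b ∈ s, Commute a b)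
    (hs : ∀ a ∈ s, ∃ l : K, IsNilpotent (a - l • 1)) : Algebra.adjoin K s →ₐ[K] K where
  toFun a := uniqueEigenvalue K (a : A)
  map_one' := uniqueEigenvalue_eq (by simp)
  map_mul' a b :=
    (Algebra.commute_of_mem_adjoin_of_pairwise_commute hcomm a.2 b.2).uniqueEigenvalue_mul
      (exists_isNilpotent_sub_smul_one_of_mem_adjoin hcomm hs a.2)
      (exists_isNilpotent_sub_smul_one_of_mem_adjoin hcomm hs b.2)
  map_zero' := uniqueEigenvalue_eq (by simp)
  map_add' a b :=
    (Algebra.commute_of_mem_adjoin_of_pairwise_commute hcomm a.2 b.2).uniqueEigenvalue_add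
      (exists_isNilpotent_sub_smul_one_of_mem_adjoin hcomm hs a.2)
      (exists_isNilpotent_sub_smul_one_of_mem_adjoin hcomm hs b.2)
  commutes' r := uniqueEigenvalue_eq (by simp [Algebra.algebraMap_eq_smul_one])

end UniqueEigenvalue

open Polynomial

namespace HahnSeries

section MapAlgHom

variable {Γ R A B : Type*} [AddCommMonoid Γ] [PartialOrder Γ] [IsOrderedCancelAddMonoid Γ]
  [CommSemiring R] [Semiring A] [Semiring B] [Algebra R A] [Algebra R B]

def mapAlgHom (f : A →ₐ[R] B) : HahnSeries Γ A →ₐ[R] HahnSeries Γ B where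
  toFun x := x.map f
  map_one' := HahnSeries.map_one (f : A →+* B).toMonoidWithZeroHom
  map_mul' _ _ := HahnSeries.map_mul (f : A →ₙ+* B)
  map_zero' := HahnSeries.map_zero (f : ZeroHom A B)
  map_add' _ _ := HahnSeries.map_add (f : A →+ B)
  commutes' r := by ext; simp [algebraMap_apply, C_apply, coeff_single, apply_ite f]

theorem mapAlgHom_apply (f : A →ₐ[R] B) (x : HahnSeries Γ A) : mapAlgHom f x = x.map f := rfl

theorem mapAlgHom_injective {f : A →ₐ[R] B} (hf : Function.Injective f) :
    Function.Injective (mapAlgHom (Γ := Γ) f) := fun x y hxy => by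
  ext i
  exact hf (congrArg (coeff · i) hxy)

end MapAlgHom

theorem exists_map_val_eq {Γ R A : Type*} [PartialOrder Γ] [CommSemiring R] [Semiring A]
    [Algebra R A] (𝒜 : Subalgebra R A) (x : HahnSeries Γ A) (hx : ∀ i, x.coeff i ∈ 𝒜) :
    ∃ y : HahnSeries Γ 𝒜, y.map 𝒜.val = x :=
  ⟨⟨fun i => ⟨x.coeff i, hx i⟩, x.isPWO_support.mono fun _ hi h0 => hi (Subtype.ext h0)⟩, rfl⟩

-- Instance search prefers the `K`-algebra structure on `LaurentSeries K` coming from power series;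
-- generic constructions on Hahn series produce `instAlgebra` instead.
theorem instAlgebra_eq_powerSeriesAlgebra {R : Type*} [CommSemiring R] :
    (instAlgebra : Algebra R (LaurentSeries R)) = powerSeriesAlgebra ℤ R :=
  Algebra.algebra_ext _ _ fun r => by ext; simp [algebraMap_apply', algebraMap_apply]

theorem leadingCoeff_pow {Γ R : Type*} [AddCommMonoid Γ] [LinearOrder Γ]
    [IsOrderedCancelAddMonoid Γ] [Semiring R] [NoZeroDivisors R] (x : HahnSeries Γ R) (n : ℕ) :
    (x ^ n).leadingCoeff = x.leadingCoeff ^ n := by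
  induction n with
  | zero => simp [leadingCoeff_one]
  | succ n ih => rw [pow_succ, leadingCoeff_mul, ih, pow_succ]

theorem order_eq_of_forall_lt_coeff_eq_zero {Γ R : Type*} [LinearOrder Γ] [Zero Γ] [Zero R]
    {x : HahnSeries Γ R} {i : Γ} (hi : x.coeff i ≠ 0) (h : ∀ j < i, x.coeff j = 0) :
    x.order = i := by
  refine le_antisymm (order_le_of_coeff_ne_zero hi) (not_lt.mp fun hlt => ?_)
  have hx : x ≠ 0 := by rintro rfl; exact hi rfl
  exact mt coeff_order_eq_zero.mp hx (h _ hlt)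

end HahnSeries

section LDeriv

theorem coeff_lderiv {R : Type*} [Ring R] (X : LaurentSeries R) (i : ℤ) :
    (lderiv X).coeff i = (i + 1) • X.coeff (i + 1) := rfl

theorem lderiv_map {R S F : Type*} [Ring R] [Ring S] [FunLike F R S] [AddMonoidHomClass F R S]
    (f : F) (X : LaurentSeries R) : (lderiv X).map f = lderiv (X.map f) := by
  ext i
  simp only [HahnSeries.map_coeff, coeff_lderiv, map_zsmul]

theorem mapAlgHom_aeval {K A B : Type*} [CommRing K] [Ring A] [Ring B] [Algebra K A]
    [Algebra K B] (f : A →ₐ[K] B) (X : LaurentSeries A) (g : K[X]) :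
    HahnSeries.mapAlgHom f (aeval X g) = aeval (X.map f) g :=
  (aeval_algHom_apply _ _ _).symm

theorem mapAlgHom_aeval_mul_lderiv {K A B : Type*} [CommRing K] [Ring A] [Ring B] [Algebra K A]
    [Algebra K B] (f : A →ₐ[K] B) (X : LaurentSeries A) (g : K[X]) :
    HahnSeries.mapAlgHom f (aeval X g * lderiv X) = aeval (X.map f) g * lderiv (X.map f) := by
  rw [map_mul, mapAlgHom_aeval, HahnSeries.mapAlgHom_apply, lderiv_map]

variable {K : Type*} [Field K] [CharZero K] {f : LaurentSeries K}

theorem order_lderiv (hf : f ≠ 0) (ho : f.order ≠ 0) : (lderiv f).order = f.order - 1 := by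
  refine HahnSeries.order_eq_of_forall_lt_coeff_eq_zero ?_ fun j hj => ?_
  · rw [coeff_lderiv, sub_add_cancel, ← HahnSeries.leadingCoeff_eq, zsmul_eq_mul]
    exact mul_ne_zero (Int.cast_ne_zero.mpr ho) (HahnSeries.leadingCoeff_ne_zero.mpr hf)
  · rw [coeff_lderiv, HahnSeries.coeff_eq_zero_of_lt_order (by omega), smul_zero]

theorem leadingCoeff_lderiv (hf : f ≠ 0) (ho : f.order ≠ 0) :
    (lderiv f).leadingCoeff = f.order * f.leadingCoeff := by
  rw [HahnSeries.leadingCoeff_eq, order_lderiv hf ho, coeff_lderiv, sub_add_cancel,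
    HahnSeries.leadingCoeff_eq, zsmul_eq_mul]

end LDeriv

section ScalarEquation

variable {K : Type*} [Field K] {f : LaurentSeries K}

theorem coeff_aeval (f : LaurentSeries K) (g : K[X]) (i : ℤ) :
    (aeval f g).coeff i = ∑ j ∈ Finset.range (g.natDegree + 1), g.coeff j * (f ^ j).coeff i := by
  rw [← HahnSeries.instAlgebra_eq_powerSeriesAlgebra,
    @aeval_eq_sum_range _ _ _ _ HahnSeries.instAlgebra, HahnSeries.coeff_sum]
  simp only [HahnSeries.coeff_smul, smul_eq_mul]

theorem coeff_aeval_of_le_natDegree_mul_order (ho : f.order < 0) {g : K[X]} {i : ℤ}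
    (hi : i ≤ g.natDegree * f.order) :
    (aeval f g).coeff i = g.leadingCoeff * (f ^ g.natDegree).coeff i := by
  rw [coeff_aeval, Finset.sum_eq_single_of_mem _ (Finset.self_mem_range_succ _)]
  · rfl
  intro j hj hjm
  have hjm : j < g.natDegree := by have := Finset.mem_range.mp hj; omega
  have : i < (f ^ j).order := by
    rw [HahnSeries.order_pow, nsmul_eq_mul]
    exact hi.trans_lt (mul_lt_mul_of_neg_right (by exact_mod_cast hjm) ho)
  rw [HahnSeries.coeff_eq_zero_of_lt_order this, mul_zero]

theorem coeff_pow_natCast_mul_order (f : LaurentSeries K) (n : ℕ) :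
    (f ^ n).coeff (n * f.order) = f.leadingCoeff ^ n := by
  rw [← HahnSeries.leadingCoeff_pow, HahnSeries.leadingCoeff_eq, HahnSeries.order_pow,
    nsmul_eq_mul]

theorem order_aeval (hf : f ≠ 0) (ho : f.order < 0) {g : K[X]} (hg : g ≠ 0) :
    (aeval f g).order = g.natDegree * f.order := by
  refine HahnSeries.order_eq_of_forall_lt_coeff_eq_zero ?_ fun j hj => ?_
  · rw [coeff_aeval_of_le_natDegree_mul_order ho le_rfl, coeff_pow_natCast_mul_order]
    exact mul_ne_zero (leadingCoeff_ne_zero.mpr hg)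
      (pow_ne_zero _ (HahnSeries.leadingCoeff_ne_zero.mpr hf))
  · rw [coeff_aeval_of_le_natDegree_mul_order ho hj.le, HahnSeries.coeff_eq_zero_of_lt_order,
      mul_zero]
    rwa [HahnSeries.order_pow, nsmul_eq_mul]

theorem leadingCoeff_aeval (hf : f ≠ 0) (ho : f.order < 0) {g : K[X]} (hg : g ≠ 0) :
    (aeval f g).leadingCoeff = g.leadingCoeff * f.leadingCoeff ^ g.natDegree := by
  rw [HahnSeries.leadingCoeff_eq, order_aeval hf ho hg,
    coeff_aeval_of_le_natDegree_mul_order ho le_rfl, coeff_pow_natCast_mul_order]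

theorem order_eq_neg_one_of_aeval_mul_lderiv_eq [CharZero K] {p q : K[X]} (hp : p ≠ 0)
    (hq : q ≠ 0) (hf : f ≠ 0) (ho : f.order < 0) (heq : aeval f q * lderiv f = aeval f p) :
    f.order = -1 ∧ p.natDegree = q.natDegree + 2 ∧
      f.coeff (-1) = -q.leadingCoeff / p.leadingCoeff := by
  have hc : f.leadingCoeff ≠ 0 := HahnSeries.leadingCoeff_ne_zero.mpr hf
  have hq0 : aeval f q ≠ 0 := by
    rw [← HahnSeries.leadingCoeff_ne_zero, leadingCoeff_aeval hf ho hq]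
    exact mul_ne_zero (leadingCoeff_ne_zero.mpr hq) (pow_ne_zero _ hc)
  have hL : lderiv f ≠ 0 := by
    rw [← HahnSeries.leadingCoeff_ne_zero, leadingCoeff_lderiv hf ho.ne]
    exact mul_ne_zero (Int.cast_ne_zero.mpr ho.ne) hc
  have hord : (p.natDegree : ℤ) * f.order = q.natDegree * f.order + (f.order - 1) := by
    rw [← order_aeval hf ho hp, ← heq, HahnSeries.order_mul hq0 hL, order_aeval hf ho hq,
      order_lderiv hf ho.ne]
  have ho1 : f.order = -1 := by
    have h : f.order * (p.natDegree - q.natDegree - 1) = -1 := by linarith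
    exact (Int.eq_one_or_neg_one_of_mul_eq_neg_one h).resolve_left (by omega)
  have hdeg : p.natDegree = q.natDegree + 2 := by
    rw [ho1] at hord
    omega
  have hlc : p.leadingCoeff * f.leadingCoeff ^ p.natDegree =
      q.leadingCoeff * f.leadingCoeff ^ q.natDegree * (f.order * f.leadingCoeff) := by
    rw [← leadingCoeff_aeval hf ho hp, ← heq, HahnSeries.leadingCoeff_mul,
      leadingCoeff_aeval hf ho hq, leadingCoeff_lderiv hf ho.ne]
  refine ⟨ho1, hdeg, ?_⟩
  rw [← ho1, ← HahnSeries.leadingCoeff_eq, eq_div_iff (leadingCoeff_ne_zero.mpr hp)]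
  refine mul_right_cancel₀ (pow_ne_zero (q.natDegree + 1) hc) ?_
  rw [ho1, hdeg] at hlc
  push_cast at hlc
  linear_combination hlc

end ScalarEquation

theorem aeval_mul_lderiv_eq_of_isNilpotent_sub_smul_one {K A : Type*} [Field K] [Ring A]
    [Algebra K A] [Nontrivial A] {X : LaurentSeries A} {X₀ : LaurentSeries K} {p q : K[X]}
    (hcomm : ∀ i j, Commute (X.coeff i) (X.coeff j))
    (hX₀ : ∀ i, IsNilpotent (X.coeff i - X₀.coeff i • 1))
    (hX : aeval X q * lderiv X = aeval X p) : aeval X₀ q * lderiv X₀ = aeval X₀ p := by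
  have hcomm' : ∀ a ∈ Set.range X.coeff, ∀ b ∈ Set.range X.coeff, Commute a b := by
    rintro _ ⟨i, rfl⟩ _ ⟨j, rfl⟩
    exact hcomm i j
  have heig : ∀ a ∈ Set.range X.coeff, ∃ l : K, IsNilpotent (a - l • 1) := by
    rintro _ ⟨i, rfl⟩
    exact ⟨_, hX₀ i⟩
  obtain ⟨Y, hY⟩ := HahnSeries.exists_map_val_eq (Algebra.adjoin K (Set.range X.coeff)) X
    fun i => Algebra.subset_adjoin ⟨i, rfl⟩
  have hYsol : aeval Y q * lderiv Y = aeval Y p := by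
    apply HahnSeries.mapAlgHom_injective (f := Subalgebra.val _) Subtype.val_injective
    rwa [mapAlgHom_aeval_mul_lderiv, mapAlgHom_aeval, hY]
  have hYX₀ : Y.map (adjoinEigenvalueHom hcomm' heig) = X₀ := by
    rw [← hY] at hX₀
    ext i
    exact uniqueEigenvalue_eq (hX₀ i)
  have h := congrArg (HahnSeries.mapAlgHom (adjoinEigenvalueHom hcomm' heig)) hYsol
  rwa [mapAlgHom_aeval_mul_lderiv, mapAlgHom_aeval, hYX₀,
    HahnSeries.instAlgebra_eq_powerSeriesAlgebra] at h

theorem stmt_8_general (p q : Polynomial ℂ) (hp : p ≠ 0) (hq : q ≠ 0)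
    (n : ℕ) (hn : 1 ≤ n) (S : LaurentSeries (Matrix (Fin n) (Fin n) ℂ))
    (hS : IsSolution p q S)
    (S0 : LaurentSeries ℂ) (hS0 : IsSemisimplePart S S0)
    (hne : S0 ≠ 0) (hord : S0.order < 0) :
    S0.order = -1 ∧
    p.natDegree = q.natDegree + 2 ∧
    S0.coeff (-1) = - q.leadingCoeff / p.leadingCoeff := by
  obtain ⟨-, hcomm, hsol⟩ := hS
  have : Nonempty (Fin n) := ⟨⟨0, hn⟩⟩
  exact order_eq_neg_one_of_aeval_mul_lderiv_eq hp hq hne hord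
    (aeval_mul_lderiv_eq_of_isNilpotent_sub_smul_one hcomm hS0 hsol)

/-- an indecomposable solution whose (nonzero) semisimple part has
negative order satisfies: `ord S⁰ = -1`, `deg p = deg q + 2`, and the coefficient
of `x⁻¹` in `S⁰` is `-(lc q)/(lc p)`. -/
theorem stmt_8 (p q : Polynomial ℂ) (hp : p ≠ 0) (hq : q ≠ 0) (hpq : IsCoprime p q)
    (n : ℕ) (hn : 1 ≤ n) (S : LaurentSeries (Matrix (Fin n) (Fin n) ℂ))
    (hS : IsSolution p q S) (hind : Indecomp S)
    (S0 : LaurentSeries ℂ) (hS0 : IsSemisimplePart S S0)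
    (hne : S0 ≠ 0) (hord : S0.order < 0) :
    S0.order = -1 ∧
    p.natDegree = q.natDegree + 2 ∧
    S0.coeff (-1) = - q.leadingCoeff / p.leadingCoeff :=
  stmt_8_general p q hp hq n hn S hS S0 hS0 hne hord
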